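/- For every element x of Q: x^{c d c̄ d̄} = x; equivalently, the point symmetries S_c and S_d commute on Q. -/

import Mathlib

/-- A quandle as in the paper: a set with operations `▷` and `▷⁻¹` satisfying
axioms A1, A2, A3. -/
class PaperQuandle (Q : Type*) where
  rhd : Q → Q → Q
  rhdInv : Q → Q → Q
  fix : ∀ x : Q, rhd x x = x
  inv_rhd : ∀ x y : Q, rhdInv (rhd x y) y = x
  rhd_inv : ∀ x y : Q, rhd (rhdInv x y) y = x
  self_distrib : ∀ x y z : Q, rhd (rhd x y) z = rhd (rhd x z) (rhd y z)

infixl:65 " ▷ " => PaperQuandle.rhd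
infixl:65 " ▷⁻¹ " => PaperQuandle.rhdInv

/-- The point symmetry at `u`, as a permutation of `Q`: `x ↦ x ▷ u`,
with inverse `x ↦ x ▷⁻¹ u`. -/
def ptSym {Q : Type*} [PaperQuandle Q] (u : Q) : Equiv.Perm Q where
  toFun x := x ▷ u
  invFun x := x ▷⁻¹ u
  left_inv x := PaperQuandle.inv_rhd x u
  right_inv x := PaperQuandle.rhd_inv x u

/-!
Only the point symmetries matter, so everything happens in the group of permutations of `Q`.
Put `g = S_b S_a`. The relations make `S_a` and `S_e` involutions that invert `g`
(for `S_e` because `S_f = g S_e` is an involution), so `S_d = S_e S_a` commutes with every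
power of `g`; and `S_c = g^{-k} S_d⁻¹`, which therefore commutes with `S_d`.
-/

section Group

variable {G : Type*} [Group G]

theorem semiconjBy_inv_of_mul_self {g E : G} (hE : E * E = 1) (hgE : g * E * (g * E) = 1) :
    SemiconjBy E g g⁻¹ := by
  rw [SemiconjBy, eq_inv_mul_iff_mul_eq, ← mul_assoc]
  calc g * E * g = g * E * g * (E * E) := by rw [hE, mul_one]
    _ = g * E * (g * E) * E := by simp only [mul_assoc]
    _ = E := by rw [hgE, one_mul]

theorem commute_mul_zpow_of_semiconjBy_inv {h h' g : G} (hh : SemiconjBy h g g⁻¹)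
    (hh' : SemiconjBy h' g g⁻¹) (j : ℤ) : Commute (h * h') (g ^ j) :=
  ((inv_inv g ▸ hh.inv_right).mul_left hh').zpow_right j

theorem commute_of_relations (k : ℤ) {A B C D E F : G}
    (hA : A * A = 1) (hB : B * B = 1) (hE : E * E = 1) (hF : F * F = 1)
    (hAED : A * E * D = 1) (hFDB : F * D * B = 1)
    (hEAC : E * A * (B * A) ^ k * C = 1) :
    Commute C D := by
  set g := B * A with hg
  have hDinv : D⁻¹ = A * E := by
    rw [eq_inv_of_mul_eq_one_right hAED, inv_inv]
  have hD : D = E * A := by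
    rw [← inv_inv D, hDinv, mul_inv_rev, inv_eq_of_mul_eq_one_right hA,
      inv_eq_of_mul_eq_one_right hE]
  have hFg : F = g * E := by
    rw [mul_assoc] at hFDB
    rw [eq_inv_of_mul_eq_one_left hFDB, mul_inv_rev, hDinv, inv_eq_of_mul_eq_one_right hB,
      hg, mul_assoc]
  have hC : C = g ^ (-k) * D⁻¹ := by
    rw [eq_inv_of_mul_eq_one_right hEAC, mul_inv_rev, ← hD, zpow_neg]
  have hAg : SemiconjBy A g g⁻¹ :=
    semiconjBy_inv_of_mul_self hA (by rw [hg, mul_assoc B A A, hA, mul_one, hB])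
  have hEg : SemiconjBy E g g⁻¹ := semiconjBy_inv_of_mul_self hE (hFg ▸ hF)
  have hDg : Commute D (g ^ (-k)) := hD ▸ commute_mul_zpow_of_semiconjBy_inv hEg hAg (-k)
  rw [hC]
  exact hDg.symm.mul_left (Commute.refl D).inv_left

end Group

theorem rhd_rhd_rhdInv_rhdInv_of_commute {Q : Type*} [PaperQuandle Q] {u v : Q}
    (h : Commute (ptSym u) (ptSym v)) (x : Q) : x ▷ u ▷ v ▷⁻¹ u ▷⁻¹ v = x := by
  have hx : x ▷ v ▷ u = x ▷ u ▷ v := congrArg (· x) h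
  rw [← hx, PaperQuandle.inv_rhd, PaperQuandle.inv_rhd]

theorem stmt_7
    {Q : Type*} [PaperQuandle Q] (k : ℤ) (a b c d e f : Q)
    (rel_a : ∀ x : Q, x ▷ a ▷ a = x)
    (rel_b : ∀ x : Q, x ▷ b ▷ b = x)
    (rel_e : ∀ x : Q, x ▷ e ▷ e = x)
    (rel_f : ∀ x : Q, x ▷ f ▷ f = x)
    (rel_dea : ∀ x : Q, x ▷ d ▷ e ▷ a = x)
    (rel_bdf : ∀ x : Q, x ▷ b ▷ d ▷ f = x)
    (rel_cke : ∀ x : Q, (((ptSym b * ptSym a) ^ k) (x ▷ c)) ▷ a ▷ e = x) :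
    (∀ x : Q, x ▷ c ▷ d ▷⁻¹ c ▷⁻¹ d = x) ∧
    ptSym c * ptSym d = ptSym d * ptSym c := by
  have hcomm : Commute (ptSym c) (ptSym d) :=
    commute_of_relations k (A := ptSym a) (B := ptSym b) (E := ptSym e) (F := ptSym f)
      (Equiv.ext rel_a) (Equiv.ext rel_b) (Equiv.ext rel_e) (Equiv.ext rel_f)
      (Equiv.ext rel_dea) (Equiv.ext rel_bdf) (Equiv.ext rel_cke)
  exact ⟨rhd_rhd_rhdInv_rhdInv_of_commute hcomm, hcomm⟩
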